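/- arXiv:1510.04352 — 2 statements merged into one kernel-verified Lean document; each statement's English description precedes it below -/
import Mathlib

section
/- Let ψ be a unit vector in the tensor product H_s ⊗ H_e of finite-dimensional complex Hilbert spaces, with coefficient matrix γ (so ψ = Σ_{s,e} γ_{s,e} e_s ⊗ f_e in orthonormal bases). Then Σ over all s, s', a, b, c, d of |⟨e_s, Tr_e([M_{a,b,c,d}, |ψ⟩⟨ψ|]) e_{s'}⟩|² = 2·dim(H_s) − 2·Tr((γγ†)²), where M_{a,b,c,d} = |e_a⟩⟨e_b| ⊗ |f_c⟩⟨f_d|. -/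
open scoped ComplexConjugate Matrix

/-- The partial trace over the environment index of a matrix on the product index set. -/
noncomputable def ptraceE {ds de : ℕ} (A : Matrix (Fin ds × Fin de) (Fin ds × Fin de) ℂ) :
    Matrix (Fin ds) (Fin ds) ℂ :=
  Matrix.of fun s s' => ∑ e : Fin de, A (s, e) (s', e)

/-- The rank-one projector `|ψ⟩⟨ψ|` of the pure state with coefficient matrix `γ`
(`ψ = ∑ γ_{s,e} e_s ⊗ f_e`), written in the product basis. -/
def pureState {ds de : ℕ} (γ : Matrix (Fin ds) (Fin de) ℂ) :
    Matrix (Fin ds × Fin de) (Fin ds × Fin de) ℂ :=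
  Matrix.of fun p q => γ p.1 p.2 * conj (γ q.1 q.2)

/-- The elementary tensor operator `M_{a,b,c,d} = |e_a⟩⟨e_b| ⊗ |f_c⟩⟨f_d|` in the product
basis. -/
def elemOp {ds de : ℕ} (a b : Fin ds) (c d : Fin de) :
    Matrix (Fin ds × Fin de) (Fin ds × Fin de) ℂ :=
  Matrix.of fun p q => if p = (a, c) ∧ q = (b, d) then 1 else 0

/-! Entrywise,
`Tr_e([M_{a,b,c,d}, |ψ⟩⟨ψ|])_{s s'} = δ_{s a} γ_{b d} conj γ_{s' c} - δ_{s' b} γ_{s d} conj γ_{a c}`.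
Expanding `|z - w|² = |z|² + |w|² - 2 Re (z conj w)`, each of the two square terms sums to
`dim H_s · Tr(γγ†)²`, while the cross terms sum to `Tr((γγ†)²)`. -/

open Finset

section

variable {ds de : ℕ}

theorem ptraceE_sub (A B : Matrix (Fin ds × Fin de) (Fin ds × Fin de) ℂ) :
    ptraceE (A - B) = ptraceE A - ptraceE B := by
  ext s s'
  simp [ptraceE, sum_sub_distrib]

theorem ptraceE_elemOp_mul_pureState_apply (γ : Matrix (Fin ds) (Fin de) ℂ) (a b : Fin ds)
    (c d : Fin de) (s s' : Fin ds) :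
    ptraceE (elemOp a b c d * pureState γ) s s' = if s = a then γ b d * conj (γ s' c) else 0 := by
  simp [ptraceE, elemOp, pureState, Matrix.mul_apply, Prod.ext_iff, ite_and,
    Fintype.sum_prod_type]

theorem ptraceE_pureState_mul_elemOp_apply (γ : Matrix (Fin ds) (Fin de) ℂ) (a b : Fin ds)
    (c d : Fin de) (s s' : Fin ds) :
    ptraceE (pureState γ * elemOp a b c d) s s' = if s' = b then γ s d * conj (γ a c) else 0 := by
  simp [ptraceE, elemOp, pureState, Matrix.mul_apply, Prod.ext_iff, ite_and,
    Fintype.sum_prod_type]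

theorem re_trace_mul_conjTranspose {m n : Type*} [Fintype m] [Fintype n] (γ : Matrix m n ℂ) :
    (γ * γᴴ).trace.re = ∑ i, ∑ j, Complex.normSq (γ i j) := by
  simp [Matrix.trace, Matrix.mul_apply, Complex.mul_conj]

theorem sum_normSq_ptraceE_elemOp_mul_pureState (γ : Matrix (Fin ds) (Fin de) ℂ) :
    ∑ s, ∑ s', ∑ a, ∑ b, ∑ c, ∑ d,
        Complex.normSq (ptraceE (elemOp a b c d * pureState γ) s s')
      = ds * (γ * γᴴ).trace.re ^ 2 := by
  simp only [ptraceE_elemOp_mul_pureState_apply, apply_ite Complex.normSq, Complex.normSq_zero,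
    sum_ite_irrel, sum_const_zero, sum_ite_eq, mem_univ, if_true, Complex.normSq_mul,
    Complex.normSq_conj, ← sum_mul, ← mul_sum, re_trace_mul_conjTranspose]
  simp only [sum_const, card_univ, Fintype.card_fin, nsmul_eq_mul]
  ring

theorem sum_normSq_ptraceE_pureState_mul_elemOp (γ : Matrix (Fin ds) (Fin de) ℂ) :
    ∑ s, ∑ s', ∑ a, ∑ b, ∑ c, ∑ d,
        Complex.normSq (ptraceE (pureState γ * elemOp a b c d) s s')
      = ds * (γ * γᴴ).trace.re ^ 2 := by
  simp only [ptraceE_pureState_mul_elemOp_apply, apply_ite Complex.normSq, Complex.normSq_zero,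
    sum_ite_irrel, sum_const_zero, sum_ite_eq, mem_univ, if_true, Complex.normSq_mul,
    Complex.normSq_conj, ← sum_mul, ← mul_sum, re_trace_mul_conjTranspose]
  rw [sum_comm]
  simp only [sum_const, card_univ, Fintype.card_fin, nsmul_eq_mul]
  ring

theorem sum_ptraceE_elemOp_mul_pureState_mul_conj (γ : Matrix (Fin ds) (Fin de) ℂ) :
    ∑ s, ∑ s', ∑ a, ∑ b, ∑ c, ∑ d,
        ptraceE (elemOp a b c d * pureState γ) s s' *
          conj (ptraceE (pureState γ * elemOp a b c d) s s')
      = ((γ * γᴴ) ^ 2).trace := by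
  simp only [ptraceE_elemOp_mul_pureState_apply, ptraceE_pureState_mul_elemOp_apply,
    apply_ite conj, map_zero, mul_ite, ite_mul, zero_mul, mul_zero,
    sum_ite_irrel, sum_const_zero, sum_ite_eq, mem_univ, if_true]
  simp only [sq, Matrix.trace, Matrix.mul_apply, Matrix.conjTranspose_apply, Matrix.diag,
    mul_sum, sum_mul, Complex.star_def]
  refine sum_congr rfl fun s _ => sum_congr rfl fun s' _ => ?_
  rw [sum_comm]
  refine sum_congr rfl fun c _ => sum_congr rfl fun d _ => ?_
  simp only [map_mul, Complex.conj_conj]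
  ring

theorem sum_sq_norm_ptraceE_commutator (γ : Matrix (Fin ds) (Fin de) ℂ) :
    ∑ s, ∑ s', ∑ a, ∑ b, ∑ c, ∑ d,
        ‖ptraceE (elemOp a b c d * pureState γ - pureState γ * elemOp a b c d) s s'‖ ^ 2
      = 2 * ds * (γ * γᴴ).trace.re ^ 2 - 2 * ((γ * γᴴ) ^ 2).trace.re := by
  simp only [ptraceE_sub, Matrix.sub_apply, Complex.sq_norm, Complex.normSq_sub,
    sum_add_distrib, sum_sub_distrib, ← mul_sum, ← Complex.re_sum,
    sum_normSq_ptraceE_elemOp_mul_pureState, sum_normSq_ptraceE_pureState_mul_elemOp,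
    sum_ptraceE_elemOp_mul_pureState_mul_conj]
  ring

end

/-- For a unit vector `ψ ∈ H_s ⊗ H_e` with coefficient matrix `γ`
(`Tr(γγ†) = 1`), one has
`∑_{s,s',a,b,c,d} |⟨e_s, Tr_e([M_{a,b,c,d}, |ψ⟩⟨ψ|]) e_{s'}⟩|² = 2 dim H_s − 2 Tr((γγ†)²)`. -/
theorem stmt7 {ds de : ℕ} (γ : Matrix (Fin ds) (Fin de) ℂ)
    (hγ : Matrix.trace (γ * γᴴ) = 1) :
    ∑ s : Fin ds, ∑ s' : Fin ds, ∑ a : Fin ds, ∑ b : Fin ds, ∑ c : Fin de, ∑ d : Fin de,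
        ‖ptraceE (elemOp a b c d * pureState γ - pureState γ * elemOp a b c d) s s'‖ ^ 2
      = 2 * ds - 2 * (Matrix.trace ((γ * γᴴ) ^ 2)).re := by
  rw [sum_sq_norm_ptraceE_commutator, hγ, Complex.one_re, one_pow, mul_one]
end

section
/- With H = H₀ + P D P† as above (P Haar unitary, H₀ Hermitian diagonal, D real diagonal), for any z₁, z₂ ∈ ℂ \ ℝ with moduli larger than ‖H₀‖ + ‖D‖ and any fixed diagonal matrix M, the matrix E[G_H(z₁) M G_H(z₂)] is diagonal. -/
/-!
Let `Λ` be the diagonal unitary with `-1` in position `n` and `1` elsewhere. Left translation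
`P ↦ ΛP` preserves the Haar measure, fixes the diagonal matrices `H₀`, `D`, `M`, and turns
`H₀ + P D Pᴴ - z` into its conjugate by `Λ`; hence the integrand `G(z₁) M G(z₂)` is conjugated by
`Λ` too, which negates its `(n, m)` entry for `m ≠ n`. An integral that changes sign under a
measure-preserving map vanishes.
-/

open MeasureTheory
open scoped Matrix

noncomputable local instance matrixMeasurableSpace {N : ℕ} : MeasurableSpace (Matrix (Fin N) (Fin N) ℂ) :=
  MeasurableSpace.pi

noncomputable local instance matrixTopologicalSpace {N : ℕ} : TopologicalSpace (Matrix (Fin N) (Fin N) ℂ) :=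
  Pi.topologicalSpace

namespace Matrix

section SignDiagonal

variable {n R : Type*} [DecidableEq n] [CommRing R]

def signDiagonal (i : n) : Matrix n n R :=
  diagonal fun k => if k = i then -1 else 1

theorem signDiagonal_mul_self [Fintype n] (i : n) :
    signDiagonal i * signDiagonal i = (1 : Matrix n n R) := by
  rw [signDiagonal, diagonal_mul_diagonal, ← diagonal_one]
  congr 1
  ext k
  split_ifs <;> simp

theorem signDiagonal_conjTranspose [StarRing R] (i : n) :
    (signDiagonal i : Matrix n n R)ᴴ = signDiagonal i := by
  rw [signDiagonal, diagonal_conjTranspose]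
  congr 1
  ext k
  split_ifs with h <;> simp [h]

theorem signDiagonal_mem_unitaryGroup [Fintype n] [StarRing R] (i : n) :
    (signDiagonal i : Matrix n n R) ∈ unitaryGroup n R := by
  rw [mem_unitaryGroup_iff, star_eq_conjTranspose, signDiagonal_conjTranspose,
    signDiagonal_mul_self]

theorem signDiagonal_conj_diagonal [Fintype n] (i : n) (d : n → R) :
    signDiagonal i * diagonal d * signDiagonal i = diagonal d := by
  rw [signDiagonal, diagonal_mul_diagonal, diagonal_mul_diagonal]
  congr 1
  ext k
  split_ifs with h <;> simp [h]

theorem signDiagonal_conj_apply_of_ne [Fintype n] {i j : n} (hij : i ≠ j) (X : Matrix n n R) :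
    (signDiagonal i * X * signDiagonal i : Matrix n n R) i j = -X i j := by
  simp [signDiagonal, hij.symm]

end SignDiagonal

variable {n R : Type*} [Fintype n] [DecidableEq n] [CommRing R]

theorem inv_conj_of_mul_self_eq_one {Λ : Matrix n n R} (hΛ : Λ * Λ = 1) (A : Matrix n n R) :
    (Λ * A * Λ)⁻¹ = Λ * A⁻¹ * Λ := by
  rw [mul_inv_rev, mul_inv_rev, inv_eq_left_inv hΛ, Matrix.mul_assoc]

theorem conj_mul_conj_of_mul_self_eq_one {Λ : Matrix n n R} (hΛ : Λ * Λ = 1) (A B : Matrix n n R) :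
    Λ * A * Λ * (Λ * B * Λ) = Λ * (A * B) * Λ := by
  simp only [Matrix.mul_assoc, ← Matrix.mul_assoc Λ Λ, hΛ, Matrix.one_mul]

theorem add_mul_mul_conjTranspose_sub_smul_of_conj [StarRing R] {Λ H₀ : Matrix n n R}
    (hΛ : Λ * Λ = 1) (hΛH : Λᴴ = Λ) (hH₀ : Λ * H₀ * Λ = H₀) (P D : Matrix n n R) (z : R) :
    H₀ + Λ * P * D * (Λ * P)ᴴ - z • 1 = Λ * (H₀ + P * D * Pᴴ - z • 1) * Λ := by
  rw [conjTranspose_mul, hΛH, Matrix.mul_sub, Matrix.sub_mul, Matrix.mul_add, Matrix.add_mul,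
    Matrix.mul_smul, Matrix.smul_mul, Matrix.mul_one, hΛ, hH₀]
  simp only [Matrix.mul_assoc]

theorem measurable_const_mul {N : ℕ} (B : Matrix (Fin N) (Fin N) ℂ) :
    Measurable fun A : Matrix (Fin N) (Fin N) ℂ => B * A := by
  refine measurable_pi_iff.2 fun i => measurable_pi_iff.2 fun j => ?_
  simp only [mul_apply]
  fun_prop

theorem measurable_mul_const {N : ℕ} (B : Matrix (Fin N) (Fin N) ℂ) :
    Measurable fun A : Matrix (Fin N) (Fin N) ℂ => A * B := by
  refine measurable_pi_iff.2 fun i => measurable_pi_iff.2 fun j => ?_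
  simp only [mul_apply]
  fun_prop

instance unitaryGroup.measurableMul {N : ℕ} : MeasurableMul (unitaryGroup (Fin N) ℂ) where
  measurable_const_mul U := ((measurable_const_mul U.1).comp measurable_subtype_coe).subtype_mk
  measurable_mul_const U := ((measurable_mul_const U.1).comp measurable_subtype_coe).subtype_mk

end Matrix

theorem stmt14_general {N : ℕ} (μ : Measure (Matrix.unitaryGroup (Fin N) ℂ))
    [μ.IsHaarMeasure]
    (d₀ dD : Fin N → ℝ) (dM : Fin N → ℂ) (z₁ z₂ : ℂ) :
    ∀ n m : Fin N, n ≠ m →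
      ∫ P : Matrix.unitaryGroup (Fin N) ℂ,
          ((((Matrix.diagonal fun l => (d₀ l : ℂ)) +
                (P : Matrix (Fin N) (Fin N) ℂ) * (Matrix.diagonal fun l => (dD l : ℂ)) *
                  (P : Matrix (Fin N) (Fin N) ℂ)ᴴ -
                z₁ • (1 : Matrix (Fin N) (Fin N) ℂ))⁻¹ *
              Matrix.diagonal dM *
            ((Matrix.diagonal fun l => (d₀ l : ℂ)) +
                (P : Matrix (Fin N) (Fin N) ℂ) * (Matrix.diagonal fun l => (dD l : ℂ)) *
                  (P : Matrix (Fin N) (Fin N) ℂ)ᴴ -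
                z₂ • (1 : Matrix (Fin N) (Fin N) ℂ))⁻¹) n m) ∂μ = 0 := by
  intro n m hnm
  open Matrix in
  have hΛ := signDiagonal_mul_self (R := ℂ) n
  have hconj := add_mul_mul_conjTranspose_sub_smul_of_conj hΛ (signDiagonal_conjTranspose n)
    (signDiagonal_conj_diagonal n fun l => (d₀ l : ℂ))
  refine integral_eq_zero_of_mul_left_eq_neg (g := ⟨_, signDiagonal_mem_unitaryGroup n⟩)
    fun P => ?_
  simp only [Submonoid.coe_mul, hconj, inv_conj_of_mul_self_eq_one hΛ]
  conv_lhs => rw [← signDiagonal_conj_diagonal n dM, conj_mul_conj_of_mul_self_eq_one hΛ,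
    conj_mul_conj_of_mul_self_eq_one hΛ]
  exact signDiagonal_conj_apply_of_ne hnm _

/-- With `H = H₀ + P D P†` (`P` Haar unitary, `H₀` Hermitian diagonal
with diagonal `d₀`, `D` real diagonal with diagonal `dD`), for any `z₁, z₂ ∈ ℂ \ ℝ` of
modulus larger than `‖H₀‖ + ‖D‖` and any fixed diagonal matrix `M` (diagonal `dM`), the
matrix `E[G_H(z₁) M G_H(z₂)]` is diagonal. -/
theorem stmt14 {N : ℕ} (μ : Measure (Matrix.unitaryGroup (Fin N) ℂ))
    [IsProbabilityMeasure μ] [μ.IsHaarMeasure]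
    (d₀ dD : Fin N → ℝ) (dM : Fin N → ℂ) (z₁ z₂ : ℂ)
    (hz₁ : z₁.im ≠ 0) (hz₂ : z₂.im ≠ 0)
    (hlarge₁ : (⨆ n, |d₀ n|) + (⨆ n, |dD n|) < ‖z₁‖)
    (hlarge₂ : (⨆ n, |d₀ n|) + (⨆ n, |dD n|) < ‖z₂‖) :
    ∀ n m : Fin N, n ≠ m →
      ∫ P : Matrix.unitaryGroup (Fin N) ℂ,
          ((((Matrix.diagonal fun l => (d₀ l : ℂ)) +
                (P : Matrix (Fin N) (Fin N) ℂ) * (Matrix.diagonal fun l => (dD l : ℂ)) *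
                  (P : Matrix (Fin N) (Fin N) ℂ)ᴴ -
                z₁ • (1 : Matrix (Fin N) (Fin N) ℂ))⁻¹ *
              Matrix.diagonal dM *
            ((Matrix.diagonal fun l => (d₀ l : ℂ)) +
                (P : Matrix (Fin N) (Fin N) ℂ) * (Matrix.diagonal fun l => (dD l : ℂ)) *
                  (P : Matrix (Fin N) (Fin N) ℂ)ᴴ -
                z₂ • (1 : Matrix (Fin N) (Fin N) ℂ))⁻¹) n m) ∂μ = 0 :=
  stmt14_general μ d₀ dD dM z₁ z₂
end
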